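/- For every definition environment D over a finite set F of function names, annotated reduction is strongly normalizing: there is no infinite sequence t̄₀ → t̄₁ → t̄₂ → ⋯ of annotated reduction steps. Hence every annotated reduction sequence, in a finite number of steps, reaches a term admitting no further annotated reduction step. -/

import Mathlib

/-- First-order terms over function names `F` and variables `X`. -/
inductive Tm (F : Type) (X : Type) : Type where
  | var : X → Tm F X
  | app : F → List (Tm F X) → Tm F X

/-- Annotated first-order terms: each application node carries a trace (list of
function names). -/
inductive ATm (F : Type) (X : Type) : Type where
  | var : X → ATm F X
  | app : F → List (ATm F X) → List F → ATm F X

/-- A definition environment: each function name has an arity and a body whose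
free variables are among `x₁, …, xₙ` (modelled as `Fin (arity f)`). -/
structure Env (F : Type) where
  arity : F → ℕ
  body : (f : F) → Tm F (Fin (arity f))

/-- The annotating substitution `t[σ]^l`. -/
def annSub {F X V : Type} (σ : V → ATm F X) (l : List F) : Tm F V → ATm F X
  | .var v => σ v
  | .app f ts => .app f (ts.attach.map fun t => annSub σ l t.1) l
decreasing_by all_goals (simp_wf; have := List.sizeOf_lt_of_mem t.2; simp_all; omega)

/-- Ordinary (capture-free) substitution on unannotated terms. -/
def subst {F X V : Type} (σ : V → Tm F X) : Tm F V → Tm F X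
  | .var v => σ v
  | .app f ts => .app f (ts.attach.map fun t => subst σ t.1)
decreasing_by all_goals (simp_wf; have := List.sizeOf_lt_of_mem t.2; simp_all; omega)

/-- Erasure: delete all traces. -/
def erase {F X : Type} : ATm F X → Tm F X
  | .var x => .var x
  | .app f ts _ => .app f (ts.attach.map fun t => erase t.1)
decreasing_by all_goals (simp_wf; have := List.sizeOf_lt_of_mem t.2; simp_all; omega)

/-- One step of annotated reduction with respect to `D`. -/
inductive ARed {F X : Type} (D : Env F) : ATm F X → ATm F X → Prop where
  | head : ∀ (f : F) (l : List F) (args : List (ATm F X))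
      (h : args.length = D.arity f), f ∉ l →
      ARed D (.app f args l)
        (annSub (fun i => args.get (Fin.cast h.symm i)) (l ++ [f]) (D.body f))
  | congr : ∀ (f : F) (l : List F) (pre post : List (ATm F X)) (t t' : ATm F X),
      ARed D t t' →
      ARed D (.app f (pre ++ t :: post) l) (.app f (pre ++ t' :: post) l)

/-- One step of β-reduction on unannotated terms with respect to `D`. -/
inductive Beta {F X : Type} (D : Env F) : Tm F X → Tm F X → Prop where
  | head : ∀ (f : F) (args : List (Tm F X)) (h : args.length = D.arity f),
      Beta D (.app f args)
        (subst (fun i => args.get (Fin.cast h.symm i)) (D.body f))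
  | congr : ∀ (f : F) (pre post : List (Tm F X)) (t t' : Tm F X),
      Beta D t t' →
      Beta D (.app f (pre ++ t :: post)) (.app f (pre ++ t' :: post))

/-- Subterm relation on annotated terms. -/
inductive ASubtm {F X : Type} : ATm F X → ATm F X → Prop where
  | refl : ∀ t, ASubtm t t
  | arg : ∀ (s u : ATm F X) (f : F) (args : List (ATm F X)) (l : List F),
      u ∈ args → ASubtm s u → ASubtm s (.app f args l)

/-- Subterm relation on unannotated terms. -/
inductive Subtm {F X : Type} : Tm F X → Tm F X → Prop where
  | refl : ∀ t, Subtm t t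
  | arg : ∀ (s u : Tm F X) (f : F) (args : List (Tm F X)),
      u ∈ args → Subtm s u → Subtm s (.app f args)

/-- `t[∅]^∅`: annotate an unannotated term with empty traces everywhere. -/
def annInit {F X : Type} (t : Tm F X) : ATm F X := annSub (fun x => .var x) [] t

/-- A term is reachable if it occurs as a subterm of a term in an annotated
reduction sequence starting from a term annotated with empty traces. -/
def Reachable {F X : Type} (D : Env F) (s : ATm F X) : Prop :=
  ∃ (t : Tm F X) (w : ATm F X),
    Relation.ReflTransGen (ARed D) (annInit t) w ∧ ASubtm s w

/-- `t̄` contains a blocked redex `f(…)^l` with `f ∈ l`. -/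
def HasBlockedRedex {F X : Type} (t : ATm F X) : Prop :=
  ∃ (f : F) (args : List (ATm F X)) (l : List F),
    ASubtm (.app f args l) t ∧ f ∈ l

-- ====== development ======

section SN

variable {F X : Type}

/-- capacity of a trace: how many function names are not yet in it. -/
noncomputable def cap (F : Type) [Finite F] (l : List F) : ℕ :=
  ({g : F | g ∉ l} : Set F).ncard

lemma cap_append_lt [Finite F] {f : F} {l : List F} (hf : f ∉ l) :
    cap F (l ++ [f]) < cap F l := by
  apply Set.ncard_lt_ncard _ (Set.toFinite _)
  constructor
  · intro g hg
    simp only [Set.mem_setOf_eq, List.mem_append, List.mem_singleton] at hg ⊢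
    exact fun h => hg (Or.inl h)
  · intro hsub
    have hmem : f ∈ ({g : F | g ∉ l} : Set F) := hf
    have := hsub hmem
    simp at this

/-- size of an unannotated term -/
def sz {F V : Type} : Tm F V → ℕ
  | .var _ => 1
  | .app _ ts => 1 + (ts.attach.map fun t => sz t.1).sum
decreasing_by all_goals (simp_wf; have := List.sizeOf_lt_of_mem t.2; simp_all; omega)

lemma sz_app {V : Type} (g : F) (ts : List (Tm F V)) :
    sz (Tm.app g ts) = 1 + (ts.map sz).sum := by
  rw [sz]; simp

lemma sz_pos {V : Type} (t : Tm F V) : 1 ≤ sz t := by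
  cases t with
  | var v => rw [sz]
  | app g ts => rw [sz_app]; omega

noncomputable def bnd [Finite F] (D : Env F) : ℕ :=
  2 + (@Finset.univ F (Fintype.ofFinite F)).sup fun f : F => sz (D.body f)

lemma two_le_bnd [Finite F] (D : Env F) : 2 ≤ bnd D := Nat.le_add_right 2 _

lemma sz_body_lt [Finite F] (D : Env F) (f : F) : sz (D.body f) < bnd D := by
  unfold bnd
  have h := Finset.le_sup (s := @Finset.univ F (Fintype.ofFinite F))
    (f := fun f : F => sz (D.body f)) (@Finset.mem_univ F (Fintype.ofFinite F) f)
  omega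

def expo (B : ℕ) : ℕ → ℕ
  | 0 => 1
  | k+1 => (2 * expo B k) ^ B

lemma expo_pos (B k : ℕ) : 1 ≤ expo B k := by
  induction k with
  | zero => rw [expo]
  | succ k ih => rw [expo]; exact Nat.one_le_pow _ _ (by omega)

lemma expo_le_succ {B : ℕ} (hB : 1 ≤ B) (k : ℕ) : expo B k ≤ expo B (k+1) := by
  rw [show expo B (k+1) = (2 * expo B k) ^ B from rfl]
  calc expo B k ≤ 2 * expo B k := by omega
    _ ≤ (2 * expo B k) ^ B := Nat.le_self_pow (by omega) _

lemma expo_mono {B : ℕ} (hB : 1 ≤ B) {j k : ℕ} (h : j ≤ k) : expo B j ≤ expo B k := by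
  induction k with
  | zero => obtain rfl := Nat.le_zero.mp h; rfl
  | succ k ih =>
    rcases Nat.lt_or_ge j (k+1) with h' | h'
    · exact le_trans (ih (by omega)) (expo_le_succ hB k)
    · have : j = k+1 := by omega
      subst this; rfl

/-- the measure -/
noncomputable def meas [Finite F] (D : Env F) : ATm F X → ℕ
  | .var _ => 1
  | .app _ ts l =>
      (2 + (ts.attach.map fun t => meas D t.1).sum) ^ expo (bnd D) (cap F l)
decreasing_by all_goals (simp_wf; have := List.sizeOf_lt_of_mem t.2; simp_all; omega)

lemma meas_app [Finite F] (D : Env F) (g : F) (ts : List (ATm F X)) (l : List F) :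
    meas D (ATm.app g ts l) = (2 + (ts.map (meas D)).sum) ^ expo (bnd D) (cap F l) := by
  rw [meas]; simp

lemma annSub_app {V : Type} (σ : V → ATm F X) (l : List F) (g : F) (ts : List (Tm F V)) :
    annSub σ l (Tm.app g ts) = ATm.app g (ts.map (annSub σ l)) l := by
  rw [annSub]; simp

/-- strong induction principle for `Tm` -/
theorem Tm.strongInd {F V : Type} {P : Tm F V → Prop}
    (hv : ∀ x, P (Tm.var x))
    (ha : ∀ f ts, (∀ t ∈ ts, P t) → P (Tm.app f ts)) : ∀ t, P t := by
  have key : ∀ n (t : Tm F V), sizeOf t ≤ n → P t := by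
    intro n
    induction n with
    | zero =>
      intro t ht
      cases t <;> simp at ht
    | succ n ih =>
      intro t ht
      cases t with
      | var x => exact hv x
      | app f ts =>
        refine ha f ts fun t' ht' => ih t' ?_
        have := List.sizeOf_lt_of_mem ht'
        simp at ht
        omega
  exact fun t => key (sizeOf t) t le_rfl

lemma list_sum_le_mul {l : List ℕ} {c : ℕ} (h : ∀ a ∈ l, a ≤ c) :
    l.sum ≤ l.length * c := by
  induction l with
  | nil => simp
  | cons a l ih =>
    simp only [List.sum_cons, List.length_cons]
    have h1 := h a (by simp)
    have h2 := ih fun b hb => h b (by simp [hb])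
    calc a + l.sum ≤ c + l.length * c := by omega
      _ = (l.length + 1) * c := by ring

lemma list_length_le_sum {l : List ℕ} (h : ∀ a ∈ l, 1 ≤ a) : l.length ≤ l.sum := by
  induction l with
  | nil => simp
  | cons a l ih =>
    simp only [List.sum_cons, List.length_cons]
    have h1 := h a (by simp)
    have h2 := ih fun b hb => h b (by simp [hb])
    omega

/-- The key substitution bound. -/
lemma meas_annSub [Finite F] (D : Env F) {V : Type} (σ : V → ATm F X) (l' : List F)
    (S : ℕ) (hσ : ∀ v, meas D (σ v) ≤ S) :
    ∀ s : Tm F V,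
      meas D (annSub σ l' s) ≤ (2 + S) ^ (2 * expo (bnd D) (cap F l')) ^ sz s := by
  set e := expo (bnd D) (cap F l') with he
  have he1 : 1 ≤ e := expo_pos _ _
  set A := 2 + S with hA
  have hA2 : 2 ≤ A := by omega
  apply Tm.strongInd
  · -- var case
    intro v
    rw [annSub, sz]
    calc meas D (σ v) ≤ S := hσ v
      _ ≤ A := by omega
      _ ≤ A ^ (2 * e) ^ 1 := Nat.le_self_pow (by positivity) _
  · -- app case
    intro g ts ih
    rw [annSub_app, meas_app, List.map_map]
    set T := (ts.map (meas D ∘ annSub σ l')).sum with hT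
    set m := ts.length with hm
    set Ss := (ts.map sz).sum with hSs
    set W := (2 * e) ^ Ss with hW
    have hW1 : 1 ≤ W := Nat.one_le_pow _ _ (by omega)
    -- each summand is ≤ A ^ W
    have hterm : ∀ a ∈ ts.map (meas D ∘ annSub σ l'), a ≤ A ^ W := by
      intro a ha
      rcases List.mem_map.1 ha with ⟨t, htts, rfl⟩
      calc (meas D ∘ annSub σ l') t = meas D (annSub σ l' t) := rfl
        _ ≤ A ^ (2 * e) ^ sz t := ih t htts
        _ ≤ A ^ W := by
            apply Nat.pow_le_pow_right (by omega)
            apply Nat.pow_le_pow_right (by omega)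
            exact List.le_sum_of_mem (List.mem_map_of_mem (f := sz) htts)
    have hTle : T ≤ m * A ^ W := by
      have := list_sum_le_mul hterm
      simpa using this
    have hbase : 2 + T ≤ A ^ (W + (m + 1)) := by
      have h1 : 2 + T ≤ (m + 2) * A ^ W := by
        have hAW : 1 ≤ A ^ W := Nat.one_le_pow _ _ (by omega)
        calc 2 + T ≤ 2 + m * A ^ W := by omega
          _ ≤ 2 * A ^ W + m * A ^ W := by nlinarith
          _ = (m + 2) * A ^ W := by ring
      have h2 : m + 2 ≤ A ^ (m + 1) := by
        calc m + 2 ≤ 2 ^ (m + 1) := Nat.lt_two_pow_self (n := m+1)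
          _ ≤ A ^ (m + 1) := Nat.pow_le_pow_left (by omega) _
      calc 2 + T ≤ (m + 2) * A ^ W := h1
        _ ≤ A ^ (m + 1) * A ^ W := Nat.mul_le_mul_right _ h2
        _ = A ^ (W + (m + 1)) := by rw [← pow_add]; ring_nf
    have hmW : m + 1 ≤ W := by
      have hm1 : m ≤ Ss := by
        have : ∀ a ∈ ts.map sz, 1 ≤ a := by
          intro a ha
          rcases List.mem_map.1 ha with ⟨t, _, rfl⟩
          exact sz_pos t
        have := list_length_le_sum this
        simpa using this
      calc m + 1 ≤ Ss + 1 := by omega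
        _ ≤ 2 ^ Ss := by
            have := Nat.lt_two_pow_self (n := Ss)
            omega
        _ ≤ (2 * e) ^ Ss := Nat.pow_le_pow_left (by omega) _
    have hexp : (W + (m + 1)) * e ≤ (2 * e) ^ sz (Tm.app g ts) := by
      rw [sz_app]
      have : (2 * e) ^ (1 + Ss) = 2 * e * (2 * e) ^ Ss := by
        ring
      rw [this]
      calc (W + (m + 1)) * e ≤ (W + W) * e := by
            have := hmW; exact Nat.mul_le_mul_right _ (by omega)
        _ = 2 * e * W := by ring
        _ = 2 * e * (2 * e) ^ Ss := by first | rfl | rw [hW]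
    calc (2 + T) ^ e ≤ (A ^ (W + (m + 1))) ^ e := Nat.pow_le_pow_left hbase _
      _ = A ^ ((W + (m + 1)) * e) := by rw [← pow_mul]
      _ ≤ A ^ (2 * e) ^ sz (Tm.app g ts) := Nat.pow_le_pow_right (by omega) hexp

/-- The measure strictly decreases along annotated reduction. -/
lemma meas_ared [Finite F] (D : Env F) {t t' : ATm F X} (h : ARed D t t') :
    meas D t' < meas D t := by
  induction h with
  | head f l args hlen hfl =>
    set S := (args.map (meas D)).sum with hS
    have hσ : ∀ i : Fin (D.arity f),
        meas D (args.get (Fin.cast hlen.symm i)) ≤ S :=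
      fun i => List.le_sum_of_mem
        (List.mem_map_of_mem (f := meas D) (args.get_mem _))
    have hsub := meas_annSub D (fun i => args.get (Fin.cast hlen.symm i))
      (l ++ [f]) S hσ (D.body f)
    rw [meas_app]
    set k := cap F l with hk
    set c' := cap F (l ++ [f]) with hc'
    have hck : c' < k := cap_append_lt hfl
    obtain ⟨k', hk'⟩ : ∃ k', k = k' + 1 := ⟨k - 1, by omega⟩
    have hexp : (2 * expo (bnd D) c') ^ sz (D.body f) < expo (bnd D) k := by
      rw [hk', expo]
      calc (2 * expo (bnd D) c') ^ sz (D.body f)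
          ≤ (2 * expo (bnd D) k') ^ sz (D.body f) := by
            apply Nat.pow_le_pow_left
            have := expo_mono (B := bnd D) (by have := two_le_bnd D; omega)
              (show c' ≤ k' by omega)
            omega
        _ < (2 * expo (bnd D) k') ^ bnd D := by
            apply Nat.pow_lt_pow_right
            · have := expo_pos (bnd D) k'; omega
            · exact sz_body_lt D f
    calc meas D (annSub (fun i => args.get (Fin.cast hlen.symm i)) (l ++ [f]) (D.body f))
        ≤ (2 + S) ^ (2 * expo (bnd D) c') ^ sz (D.body f) := hsub
      _ < (2 + S) ^ expo (bnd D) k := Nat.pow_lt_pow_right (by omega) hexp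
  | congr g l pre post t t' hred ih =>
    rw [meas_app, meas_app]
    apply Nat.pow_lt_pow_left _ (by have := expo_pos (bnd D) (cap F l); omega)
    simp only [List.map_append, List.map_cons, List.sum_append, List.sum_cons]
    omega

end SN


/-- annotated reduction is strongly normalizing: there is no
infinite sequence of annotated reduction steps.  Hence every annotated
reduction sequence reaches, in finitely many steps, a term admitting no
further annotated reduction step. -/
theorem annotated_reduction_strongly_normalizing
    {F X : Type} [Finite F] [Countable X] (D : Env F) :
    ¬ ∃ seq : ℕ → ATm F X, ∀ n, ARed D (seq n) (seq (n + 1)) := by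
  rintro ⟨seq, hseq⟩
  have hd : ∀ n, meas D (seq (n+1)) < meas D (seq n) := fun n => meas_ared D (hseq n)
  have key : ∀ n, meas D (seq n) + n ≤ meas D (seq 0) := by
    intro n
    induction n with
    | zero => omega
    | succ n ih => have := hd n; omega
  have := key (meas D (seq 0) + 1)
  omega
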